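/- arXiv:1810.12361 — 3 statements merged into one kernel-verified Lean document; each statement's English description precedes it below -/
import Mathlib

section
/- Let $f(x) = \langle x - b, A(x-b) \rangle$ for a positive semidefinite matrix $A \in \mathbb{R}^{d \times d}$ (with $A$ positive definite so densities normalize) and $b \in \mathbb{R}^d$, and let $p_{\gamma,1/k}(x) \propto \exp(-\gamma f(x)^{1/k})$ for a positive integer $k$ and $\gamma > 0$. Then $\mathbb{E}_{x \sim p_{\gamma,1/k}}[f(x)] - \min_x f(x) \leq \left(\frac{k(1 + d/2) - 1}{\gamma}\right)^k$. -/
/-!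
Write `A = Bᵀ B`. The substitution `y = B (x - b)` followed by polar coordinates turns every
integral `∫ G (f x) dx` into `C ∫₀^∞ r^(d-1) G (r²) dr` with one constant `C > 0`. For the weight
`exp (-γ t^(1/k))` the radial integrals are Gamma integrals, so the mean of `f` is
`γ^(-k) Γ(dk/2 + k) / Γ(dk/2) = γ^(-k) ∏_{i<k} (dk/2 + i)`, and each factor is at most
`dk/2 + k - 1 = k (1 + d/2) - 1`.
-/

open MeasureTheory Matrix Finset Set Real
open scoped MatrixOrder

theorem Real.Gamma_add_nat_eq_mul_prod {s : ℝ} (hs : 0 < s) :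
    ∀ k : ℕ, Gamma (s + k) = Gamma s * ∏ i ∈ range k, (s + i)
  | 0 => by simp
  | k + 1 => by
    rw [Nat.cast_succ, ← add_assoc, Gamma_add_one (by positivity), Gamma_add_nat_eq_mul_prod hs k,
      prod_range_succ]
    ring

theorem prod_range_add_le_pow {s : ℝ} (hs : 0 ≤ s) (k : ℕ) :
    ∏ i ∈ range k, (s + i) ≤ (s + k - 1) ^ k := by
  calc ∏ i ∈ range k, (s + i) ≤ ∏ _i ∈ range k, (s + k - 1) :=
        prod_le_prod (fun i _ => by positivity) fun i hi => by
          have : (i : ℝ) + 1 ≤ k := by exact_mod_cast mem_range.mp hi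
          linarith
    _ = (s + k - 1) ^ k := by rw [prod_const, card_range]

theorem integral_pow_mul_exp_neg_mul_sq_rpow (n : ℕ) {p γ : ℝ} (hp : 0 < p) (hγ : 0 < γ) :
    ∫ r in Ioi (0 : ℝ), r ^ n * exp (-γ * (r ^ 2) ^ p) =
      γ ^ (-(n + 1) / (2 * p)) * (1 / (2 * p)) * Gamma ((n + 1) / (2 * p)) := by
  have hn : (-1 : ℝ) < n := by linarith [n.cast_nonneg' (α := ℝ)]
  rw [← integral_rpow_mul_exp_neg_mul_rpow (by positivity) hn hγ]
  refine setIntegral_congr_fun measurableSet_Ioi fun r (hr : 0 < r) => ?_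
  rw [← rpow_natCast, ← rpow_natCast r 2, ← rpow_mul hr.le]
  norm_num

theorem integral_sq_mul_div_integral_eq_prod (n k : ℕ) (hk : 0 < k) {γ : ℝ} (hγ : 0 < γ) :
    (∫ r in Ioi (0 : ℝ), r ^ n * (r ^ 2 * exp (-γ * (r ^ 2) ^ ((1 : ℝ) / k)))) /
        ∫ r in Ioi (0 : ℝ), r ^ n * exp (-γ * (r ^ 2) ^ ((1 : ℝ) / k)) =
      (∏ i ∈ range k, (((n + 1 : ℕ) : ℝ) * k / 2 + i)) / γ ^ k := by
  have hk' : (0 : ℝ) < k := by exact_mod_cast hk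
  have hp : (0 : ℝ) < 1 / k := by positivity
  have hmul : ∀ r : ℝ, r ^ n * (r ^ 2 * exp (-γ * (r ^ 2) ^ ((1 : ℝ) / k))) =
      r ^ (n + 2) * exp (-γ * (r ^ 2) ^ ((1 : ℝ) / k)) := fun r => by ring
  simp_rw [hmul, integral_pow_mul_exp_neg_mul_sq_rpow _ hp hγ]
  set s : ℝ := ((n + 1 : ℕ) : ℝ) * k / 2
  have hs : 0 < s := by positivity
  have hn : ((n : ℝ) + 1) / (2 * (1 / k)) = s := by simp only [s]; push_cast; field_simp
  have hn2 : (((n + 2 : ℕ) : ℝ) + 1) / (2 * (1 / k)) = s + k := by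
    simp only [s]; push_cast; field_simp; ring
  rw [neg_div, neg_div, hn, hn2, Gamma_add_nat_eq_mul_prod hs, rpow_neg hγ.le, rpow_neg hγ.le,
    rpow_add hγ, rpow_natCast]
  have := Gamma_pos_of_pos hs
  field_simp

theorem integral_comp_mulVec {ι E : Type*} [Fintype ι] [DecidableEq ι] [NormedAddCommGroup E]
    [NormedSpace ℝ E] {B : Matrix ι ι ℝ} (hB : B.det ≠ 0) (g : (ι → ℝ) → E) :
    ∫ x, g (B *ᵥ x) = |B.det|⁻¹ • ∫ y, g y := by
  have hL : LinearMap.det (toLin' B) ≠ 0 := by rwa [LinearMap.det_toLin']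
  let e : (ι → ℝ) ≃ᵐ (ι → ℝ) :=
    (LinearMap.equivOfDetNeZero _ hL).toContinuousLinearEquiv.toHomeomorph.toMeasurableEquiv
  calc ∫ x, g (B *ᵥ x) = ∫ y, g y ∂(Measure.map e volume) := (integral_map_equiv e g).symm
    _ = |B.det|⁻¹ • ∫ y, g y := by
      rw [show (e : (ι → ℝ) → ι → ℝ) = toLin' B from rfl,
        Real.map_matrix_volume_pi_eq_smul_volume_pi hB, integral_smul_measure,
        ENNReal.toReal_ofReal (abs_nonneg _), abs_inv]

theorem integral_dotProduct_self_eq_radial {ι E : Type*} [Fintype ι] [Nonempty ι]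
    [NormedAddCommGroup E] [NormedSpace ℝ E] (G : ℝ → E) :
    ∫ x : ι → ℝ, G (x ⬝ᵥ x) =
      (Fintype.card ι * volume.real (Metric.ball (0 : EuclideanSpace ℝ ι) 1)) •
        ∫ r in Ioi (0 : ℝ), r ^ (Fintype.card ι - 1) • G (r ^ 2) := by
  have hnorm : ∀ y : EuclideanSpace ℝ ι, (y.ofLp ⬝ᵥ y.ofLp) = ‖y‖ ^ 2 := fun y => by
    rw [EuclideanSpace.norm_sq_eq]
    simp [dotProduct, sq]
  rw [← (EuclideanSpace.volume_preserving_symm_measurableEquiv_toLp ι).integral_comp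
    (MeasurableEquiv.toLp 2 (ι → ℝ)).symm.measurableEmbedding]
  simp only [MeasurableEquiv.coe_toLp_symm, hnorm]
  rw [integral_fun_norm_addHaar volume (fun r => G (r ^ 2)), finrank_euclideanSpace, mul_smul,
    Nat.cast_smul_eq_nsmul]

theorem Matrix.PosDef.exists_integral_comp_quadForm_eq_radial {ι : Type*} [Fintype ι]
    [DecidableEq ι] [Nonempty ι] {A : Matrix ι ι ℝ} (hA : A.PosDef) (b : ι → ℝ) :
    ∃ C > 0, ∀ G : ℝ → ℝ, ∫ x, G ((x - b) ⬝ᵥ A *ᵥ (x - b)) =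
      C * ∫ r in Ioi (0 : ℝ), r ^ (Fintype.card ι - 1) * G (r ^ 2) := by
  obtain ⟨B, rfl⟩ := CStarAlgebra.nonneg_iff_eq_star_mul_self.mp hA.posSemidef.nonneg
  have hB : B.det ≠ 0 := fun h =>
    hA.det_pos.ne' (by rw [star_eq_conjTranspose, det_mul, h, mul_zero])
  have hquad : ∀ v, v ⬝ᵥ (star B * B) *ᵥ v = B *ᵥ v ⬝ᵥ B *ᵥ v := fun v => by
    rw [← mulVec_mulVec, dotProduct_mulVec, star_eq_conjTranspose,
      conjTranspose_eq_transpose_of_trivial, vecMul_transpose]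
  have hball : 0 < volume.real (Metric.ball (0 : EuclideanSpace ℝ ι) 1) :=
    ENNReal.toReal_pos (Metric.measure_ball_pos volume 0 one_pos).ne' measure_ball_lt_top.ne
  refine ⟨|B.det|⁻¹ * (Fintype.card ι * volume.real (Metric.ball (0 : EuclideanSpace ℝ ι) 1)),
    by positivity, fun G => ?_⟩
  rw [integral_sub_right_eq_self (fun x => G (x ⬝ᵥ (star B * B) *ᵥ x)) b]
  simp only [hquad]
  rw [integral_comp_mulVec hB (fun y => G (y ⬝ᵥ y)), integral_dotProduct_self_eq_radial]
  simp only [smul_eq_mul, mul_assoc]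

theorem Matrix.PosSemidef.iInf_dotProduct_mulVec_sub_eq_zero {ι : Type*} [Fintype ι]
    {A : Matrix ι ι ℝ} (hA : A.PosSemidef) (b : ι → ℝ) :
    ⨅ x, (x - b) ⬝ᵥ A *ᵥ (x - b) = 0 := by
  have hnonneg : ∀ x, 0 ≤ (x - b) ⬝ᵥ A *ᵥ (x - b) := fun x => by
    simpa using hA.dotProduct_mulVec_nonneg (x - b)
  refine le_antisymm ?_ (le_ciInf hnonneg)
  simpa using ciInf_le ⟨0, Set.forall_mem_range.mpr hnonneg⟩ b

theorem stmt_7 (d k : ℕ) (hd : 1 ≤ d) (hk : 1 ≤ k) (γ : ℝ) (hγ : 0 < γ)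
    (A : Matrix (Fin d) (Fin d) ℝ) (hA : A.PosDef) (b : Fin d → ℝ)
    (f : (Fin d → ℝ) → ℝ) (hf : ∀ x, f x = (x - b) ⬝ᵥ A.mulVec (x - b)) :
    (∫ x : Fin d → ℝ, f x * Real.exp (-γ * (f x) ^ ((1 : ℝ) / k))) /
        (∫ x : Fin d → ℝ, Real.exp (-γ * (f x) ^ ((1 : ℝ) / k))) -
      (⨅ x, f x) ≤ (((k : ℝ) * (1 + (d : ℝ) / 2) - 1) / γ) ^ k := by
  have : Nonempty (Fin d) := ⟨⟨0, hd⟩⟩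
  obtain ⟨C, hC, hradial⟩ := hA.exists_integral_comp_quadForm_eq_radial b
  simp only [hf, hA.posSemidef.iInf_dotProduct_mulVec_sub_eq_zero, sub_zero]
  rw [hradial fun t => t * exp (-γ * t ^ ((1 : ℝ) / k)),
    hradial fun t => exp (-γ * t ^ ((1 : ℝ) / k)), mul_div_mul_left _ _ hC.ne', Fintype.card_fin,
    integral_sq_mul_div_integral_eq_prod _ _ hk hγ, Nat.sub_add_cancel hd, div_pow]
  have hprod := prod_range_add_le_pow (s := d * k / 2) (by positivity) k
  calc (∏ i ∈ range k, ((d : ℝ) * k / 2 + i)) / γ ^ k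
      ≤ (d * k / 2 + k - 1) ^ k / γ ^ k := by gcongr
    _ = (k * (1 + d / 2) - 1) ^ k / γ ^ k := by ring
end

section
/- Suppose the generator $\mathcal{A}$ of a diffusion with drift $b$ and diffusion coefficient $\sigma$ satisfies the dissipativity condition $\mathcal{A}\|x\|_2^2 = 2\langle b(x), x\rangle + \|\sigma(x)\|_F^2 \leq -\alpha\|x\|_2^2 + \beta$ with $\alpha, \beta > 0$, and the growth condition $\|\sigma(x)\sigma(x)^\top\|_{op} \leq \frac{\lambda_a}{4}(1+\|x\|_2)$ (the case $r=1$). Then for every integer $n \geq 3$, $\mathcal{A}\|x\|_2^n \leq -\alpha\|x\|_2^n + \beta_{1,n}$ where $\beta_{1,n} = \beta + \frac{n\lambda_a}{8} + \frac{\alpha}{2}\left(\frac{n\lambda_a + 6\beta}{2\alpha}\right)^n$. -/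
/-!
Away from the origin `‖·‖ ^ n` has gradient `n ‖x‖ ^ (n - 2) x` and Hessian
`n ‖x‖ ^ (n - 2) I + n (n - 2) ‖x‖ ^ (n - 4) x xᵀ`, so
`𝒜 ‖x‖ ^ n = (n / 2) ‖x‖ ^ (n - 2) 𝒜 ‖x‖ ^ 2 + (n (n - 2) / 2) ‖x‖ ^ (n - 4) ⟪x, σσᵀ x⟫`;
at the origin both derivatives vanish because `n > 2`. Dissipativity and the growth bound turn
this into `-(n α / 2) ‖x‖ ^ n` plus multiples of `‖x‖ ^ (n - 2)` and `‖x‖ ^ (n - 1)`.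
Young's inequality first trades `‖x‖ ^ (n - 2)` for `‖x‖ ^ (n - 1)` and a constant, and then
absorbs `‖x‖ ^ (n - 1)` into `-((n - 2) α / 2) ‖x‖ ^ n` at the price of a constant at most
`(α / 2) ((n λ + 6 β) / (2 α)) ^ n`. Nothing requires `n` to be an integer.
-/

open MeasureTheory Matrix RealInnerProductSpace

/-- The infinitesimal generator of a diffusion with drift `b` and diffusion
coefficient `σ`: `𝒜 g (x) = ⟨b(x), ∇g(x)⟩ + (1/2)⟨σ(x)σ(x)ᵀ, ∇²g(x)⟩`. -/
noncomputable def diffusionGen {d l : ℕ}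
    (b : EuclideanSpace ℝ (Fin d) → EuclideanSpace ℝ (Fin d))
    (σ : EuclideanSpace ℝ (Fin d) → Matrix (Fin d) (Fin l) ℝ)
    (g : EuclideanSpace ℝ (Fin d) → ℝ) (x : EuclideanSpace ℝ (Fin d)) : ℝ :=
  (∑ i, b x i * fderiv ℝ g x (EuclideanSpace.single i 1)) +
    (1 / 2) * ∑ i, ∑ j, (σ x * (σ x)ᵀ) i j *
      fderiv ℝ (fun y => fderiv ℝ g y (EuclideanSpace.single j 1)) x
        (EuclideanSpace.single i 1)

open Real Filter Topology Asymptotics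

theorem Real.rpow_sub_one_mul_le {q u t : ℝ} (hq : 1 < q) (hu : 0 ≤ u) (ht : 0 ≤ t) :
    u ^ (q - 1) * t ≤ (q - 1) / q * u ^ q + t ^ q / q := by
  have hconj : (q / (q - 1)).HolderConjugate q := (HolderConjugate.conjExponent hq).symm
  have := young_inequality_of_nonneg (rpow_nonneg hu (q - 1)) ht hconj
  rw [← rpow_mul hu, mul_div_cancel₀ _ (by linarith), div_div_eq_mul_div] at this
  rwa [mul_div_assoc, mul_comm (u ^ q)] at this

theorem absorb_lower_order_rpow {p α β lam u : ℝ} (hp : 3 ≤ p) (hα : 0 < α) (hβ : 0 ≤ β)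
    (hlam : 0 ≤ lam) (hu : 0 ≤ u) :
    -(p * α / 2) * u ^ p + (p * β / 2 + p * (p - 2) * lam / 8) * u ^ (p - 2)
        + p * (p - 2) * lam / 8 * u ^ (p - 1) ≤
      -α * u ^ p + (β + p * lam / 8 + α / 2 * ((p * lam + 6 * β) / (2 * α)) ^ p) := by
  have hp1 : 0 < p - 1 := by linarith
  have hp2 : 0 ≤ p - 2 := by linarith
  set c := p * β / 2 + p * (p - 2) * lam / 8
  set a := p * (p - 2) * α / (2 * (p - 1))
  -- `a * t` is the coefficient of `u ^ (p - 1)` left after the first use of Young's inequality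
  set t := (β + (2 * p - 3) * lam / 4) / α
  have hc : 0 ≤ c := by positivity
  have ha : 0 ≤ a := by positivity
  have ht : 0 ≤ t := by
    have : 0 ≤ 2 * p - 3 := by linarith
    positivity
  have young_lower : u ^ (p - 2) ≤ (p - 2) / (p - 1) * u ^ (p - 1) + 1 / (p - 1) := by
    have := rpow_sub_one_mul_le (q := p - 1) (by linarith) hu zero_le_one
    rwa [sub_sub, one_add_one_eq_two, mul_one, one_rpow] at this
  have young_top : u ^ (p - 1) * t ≤ (p - 1) / p * u ^ p + t ^ p / p :=
    rpow_sub_one_mul_le (by linarith) hu ht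
  have hc_le : c / (p - 1) ≤ β + p * lam / 8 := by
    rw [div_le_iff₀ hp1]
    simp only [c]
    nlinarith [mul_nonneg hβ (by linarith : (0 : ℝ) ≤ p - 3),
      mul_nonneg hlam (by linarith : (0 : ℝ) ≤ p - 3)]
  have ht_le : t ≤ (p * lam + 6 * β) / (2 * α) := by
    rw [div_le_div_iff₀ hα (by positivity)]
    nlinarith [mul_nonneg hα.le hβ, mul_nonneg hα.le hlam]
  have hconst : (p - 2) / (p - 1) * (α / 2) * t ^ p ≤
      α / 2 * ((p * lam + 6 * β) / (2 * α)) ^ p := by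
    have : (p - 2) / (p - 1) ≤ 1 := by rw [div_le_one hp1]; linarith
    calc (p - 2) / (p - 1) * (α / 2) * t ^ p ≤ 1 * (α / 2) * t ^ p := by gcongr
      _ ≤ _ := by rw [one_mul]; gcongr
  calc -(p * α / 2) * u ^ p + c * u ^ (p - 2) + p * (p - 2) * lam / 8 * u ^ (p - 1)
      ≤ -(p * α / 2) * u ^ p + c * ((p - 2) / (p - 1) * u ^ (p - 1) + 1 / (p - 1))
          + p * (p - 2) * lam / 8 * u ^ (p - 1) := by gcongr
    _ = -(p * α / 2) * u ^ p + a * (u ^ (p - 1) * t) + c / (p - 1) := by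
        simp only [c, a, t]; field_simp; ring
    _ ≤ -(p * α / 2) * u ^ p + a * ((p - 1) / p * u ^ p + t ^ p / p) + c / (p - 1) := by gcongr
    _ = -α * u ^ p + (c / (p - 1) + (p - 2) / (p - 1) * (α / 2) * t ^ p) := by
        simp only [a]; field_simp; ring
    _ ≤ _ := by linarith

section NormRpow

variable {E : Type*} [NormedAddCommGroup E] [InnerProductSpace ℝ E]

theorem hasFDerivAt_norm_rpow_of_ne_zero {x : E} (hx : x ≠ 0) (q : ℝ) :
    HasFDerivAt (fun y : E ↦ ‖y‖ ^ q) ((q * ‖x‖ ^ (q - 2)) • innerSL ℝ x) x := by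
  apply HasStrictFDerivAt.hasFDerivAt
  convert (hasStrictFDerivAt_norm_sq x).rpow_const (p := q / 2) (by simp [hx]) using 0
  simp_rw [← rpow_natCast_mul (norm_nonneg _), ← Nat.cast_smul_eq_nsmul ℝ, smul_smul]
  ring_nf

theorem hasFDerivAt_mul_clm_zero {φ : E → ℝ} (hφ : Tendsto φ (𝓝 0) (𝓝 0)) (L : E →L[ℝ] ℝ) :
    HasFDerivAt (fun y ↦ φ y * L y) (0 : E →L[ℝ] ℝ) 0 := by
  refine .of_isLittleO ?_
  have hφo : φ =o[𝓝 0] (fun _ ↦ (1 : ℝ)) := (isLittleO_one_iff ℝ).mpr hφ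
  have hL : (fun y ↦ L y) =O[𝓝 0] (fun y ↦ ‖y‖) := (L.isBigO_id _).norm_right
  have hnorm : (fun y : E ↦ ‖y‖) =O[𝓝 0] (fun y ↦ y) := isBigO_norm_left.mpr (isBigO_refl _ _)
  have hprod := hφo.mul_isBigO hL
  simp only [one_mul] at hprod
  simpa using hprod.trans_isBigO hnorm

theorem fderiv_norm_rpow_apply {p : ℝ} (hp : 1 < p) (y v : E) :
    fderiv ℝ (fun z : E ↦ ‖z‖ ^ p) y v = p * ‖y‖ ^ (p - 2) * ⟪y, v⟫ := by
  simp [fderiv_norm_rpow y hp, mul_assoc]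

theorem fderiv_fderiv_norm_rpow_apply {p : ℝ} (hp : 1 < p) {x : E} (hx : x ≠ 0) (v w : E) :
    fderiv ℝ (fun y ↦ fderiv ℝ (fun z : E ↦ ‖z‖ ^ p) y v) x w =
      p * (‖x‖ ^ (p - 2) * ⟪v, w⟫ + (p - 2) * ‖x‖ ^ (p - 4) * ⟪x, v⟫ * ⟪x, w⟫) := by
  simp_rw [fderiv_norm_rpow_apply hp]
  have hpow := (hasFDerivAt_norm_rpow_of_ne_zero hx (p - 2)).const_mul p
  have hinner : HasFDerivAt (fun y : E ↦ ⟪y, v⟫) (innerSL ℝ v) x := by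
    simpa [real_inner_comm] using (innerSL ℝ v).hasFDerivAt
  rw [(show HasFDerivAt (fun y : E ↦ p * ‖y‖ ^ (p - 2) * ⟪y, v⟫) _ x from
    hpow.mul hinner).fderiv]
  simp only [_root_.add_apply, _root_.smul_apply, coe_innerSL_apply, smul_eq_mul]
  ring_nf

theorem fderiv_fderiv_norm_rpow_zero {p : ℝ} (hp : 2 < p) (v : E) :
    fderiv ℝ (fun y ↦ fderiv ℝ (fun z : E ↦ ‖z‖ ^ p) y v) 0 = 0 := by
  simp_rw [fderiv_norm_rpow_apply (one_lt_two.trans hp)]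
  have hφ : Tendsto (fun y : E ↦ p * ‖y‖ ^ (p - 2)) (𝓝 0) (𝓝 0) := by
    have hcont : Continuous (fun y : E ↦ p * ‖y‖ ^ (p - 2)) := by fun_prop (disch := linarith)
    simpa [(sub_pos.mpr hp).ne'] using hcont.tendsto 0
  simpa [real_inner_comm] using (hasFDerivAt_mul_clm_zero hφ (innerSL ℝ v)).fderiv

end NormRpow

theorem Matrix.trace_mul_transpose_self {m k : Type*} [Fintype m] [Fintype k]
    (M : Matrix m k ℝ) : (M * Mᵀ).trace = ∑ i, ∑ j, M i j ^ 2 := by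
  simp [Matrix.trace, Matrix.mul_apply, sq]

section Generator

variable {d l : ℕ} (b : EuclideanSpace ℝ (Fin d) → EuclideanSpace ℝ (Fin d))
  (σ : EuclideanSpace ℝ (Fin d) → Matrix (Fin d) (Fin l) ℝ)

theorem diffusionGen_norm_rpow {p : ℝ} (hp : 1 < p) {x : EuclideanSpace ℝ (Fin d)} (hx : x ≠ 0) :
    diffusionGen b σ (fun y ↦ ‖y‖ ^ p) x =
      p / 2 * ‖x‖ ^ (p - 2) * (2 * ⟪b x, x⟫ + ∑ i, ∑ j, σ x i j ^ 2) +
        p * (p - 2) / 2 * ‖x‖ ^ (p - 4) * ⟪x, toEuclideanCLM (𝕜 := ℝ) (σ x * (σ x)ᵀ) x⟫ := by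
  rw [← trace_mul_transpose_self, inner_toEuclideanCLM]
  simp only [diffusionGen, fderiv_fderiv_norm_rpow_apply hp hx]
  simp only [fderiv_norm_rpow_apply hp, conj_trivial, one_mul,
    PiLp.ofLp_single, Pi.single_apply, mul_add, mul_ite, ite_mul, mul_one, mul_zero, zero_mul,
    Finset.sum_add_distrib, Finset.sum_ite_eq', Finset.mem_univ, if_true, Finset.mul_sum,
    real_inner_comm x, PiLp.inner_apply, RCLike.inner_apply, Matrix.trace, Matrix.diag,
    dotProduct, mulVec]
  rw [add_assoc]
  congr 1
  · exact Finset.sum_congr rfl fun i _ ↦ by ring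
  congr 1
  · exact Finset.sum_congr rfl fun i _ ↦ by ring
  · exact Finset.sum_congr rfl fun i _ ↦ Finset.sum_congr rfl fun j _ ↦ by ring

theorem diffusionGen_norm_rpow_zero {p : ℝ} (hp : 2 < p) :
    diffusionGen b σ (fun y ↦ ‖y‖ ^ p) 0 = 0 := by
  simp only [diffusionGen, fderiv_fderiv_norm_rpow_zero hp]
  simp [fderiv_norm_rpow_apply (one_lt_two.trans hp)]

theorem diffusionGen_norm_rpow_le {p α β lam : ℝ} (hp : 2 ≤ p)
    {x : EuclideanSpace ℝ (Fin d)} (hx : x ≠ 0)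
    (hdiss : 2 * ⟪b x, x⟫ + ∑ i, ∑ j, σ x i j ^ 2 ≤ -α * ‖x‖ ^ 2 + β)
    (hgrow : ‖toEuclideanCLM (𝕜 := ℝ) (σ x * (σ x)ᵀ)‖ ≤ lam / 4 * (1 + ‖x‖)) :
    diffusionGen b σ (fun y ↦ ‖y‖ ^ p) x ≤
      -(p * α / 2) * ‖x‖ ^ p + (p * β / 2 + p * (p - 2) * lam / 8) * ‖x‖ ^ (p - 2)
        + p * (p - 2) * lam / 8 * ‖x‖ ^ (p - 1) := by
  rw [diffusionGen_norm_rpow b σ (by linarith) hx]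
  set T := toEuclideanCLM (𝕜 := ℝ) (σ x * (σ x)ᵀ)
  have hu : 0 < ‖x‖ := norm_pos_iff.mpr hx
  have hquad : ⟪x, T x⟫ ≤ lam / 4 * (1 + ‖x‖) * ‖x‖ ^ 2 :=
    calc ⟪x, T x⟫ ≤ ‖x‖ * ‖T x‖ := real_inner_le_norm _ _
      _ ≤ ‖x‖ * (‖T‖ * ‖x‖) := by gcongr; exact T.le_opNorm x
      _ ≤ ‖x‖ * (lam / 4 * (1 + ‖x‖) * ‖x‖) := by gcongr
      _ = lam / 4 * (1 + ‖x‖) * ‖x‖ ^ 2 := by ring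
  have hc₁ : 0 ≤ p / 2 * ‖x‖ ^ (p - 2) := by positivity
  have hc₂ : 0 ≤ p * (p - 2) / 2 * ‖x‖ ^ (p - 4) := by
    have : 0 ≤ p - 2 := by linarith
    positivity
  have hpow₂ : ‖x‖ ^ (p - 2) * ‖x‖ ^ 2 = ‖x‖ ^ p := by
    rw [← rpow_add_natCast hu.ne']; congr 1; push_cast; ring
  have hpow₄ : ‖x‖ ^ (p - 4) * ‖x‖ ^ 2 = ‖x‖ ^ (p - 2) := by
    rw [← rpow_add_natCast hu.ne']; congr 1; push_cast; ring
  have hpow₃ : ‖x‖ ^ (p - 4) * ‖x‖ ^ 3 = ‖x‖ ^ (p - 1) := by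
    rw [← rpow_add_natCast hu.ne']; congr 1; push_cast; ring
  calc _ ≤ p / 2 * ‖x‖ ^ (p - 2) * (-α * ‖x‖ ^ 2 + β) +
        p * (p - 2) / 2 * ‖x‖ ^ (p - 4) * (lam / 4 * (1 + ‖x‖) * ‖x‖ ^ 2) :=
        add_le_add (mul_le_mul_of_nonneg_left hdiss hc₁) (mul_le_mul_of_nonneg_left hquad hc₂)
    _ = _ := by
        linear_combination (-(p * α / 2)) * hpow₂ + (p * (p - 2) * lam / 8) * hpow₄
          + (p * (p - 2) * lam / 8) * hpow₃

end Generator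

theorem stmt_15_general (d l : ℕ)
    (b : EuclideanSpace ℝ (Fin d) → EuclideanSpace ℝ (Fin d))
    (σ : EuclideanSpace ℝ (Fin d) → Matrix (Fin d) (Fin l) ℝ)
    (α β lam_a : ℝ) (hα : 0 < α) (hβ : 0 < β) (hlam : 0 < lam_a)
    (hdiss : ∀ x : EuclideanSpace ℝ (Fin d),
      2 * ⟪b x, x⟫ + ∑ i, ∑ j, (σ x i j) ^ 2 ≤ -α * ‖x‖ ^ 2 + β)
    (hgrow : ∀ x : EuclideanSpace ℝ (Fin d),
      ‖Matrix.toEuclideanCLM (𝕜 := ℝ) (σ x * (σ x)ᵀ)‖ ≤ lam_a / 4 * (1 + ‖x‖))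
    (n : ℕ) (hn : 3 ≤ n) (x : EuclideanSpace ℝ (Fin d)) :
    diffusionGen b σ (fun y => ‖y‖ ^ n) x ≤
      -α * ‖x‖ ^ n +
        (β + n * lam_a / 8 + α / 2 * ((n * lam_a + 6 * β) / (2 * α)) ^ n) := by
  have hn' : (3 : ℝ) ≤ n := by exact_mod_cast hn
  simp only [← rpow_natCast]
  by_cases hx : x = 0
  · subst hx
    rw [diffusionGen_norm_rpow_zero b σ (by linarith), norm_zero,
      zero_rpow (by positivity), mul_zero, zero_add]
    positivity
  calc _ ≤ _ := diffusionGen_norm_rpow_le b σ (by linarith) hx (hdiss x) (hgrow x)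
    _ ≤ _ := absorb_lower_order_rpow hn' hα hβ.le hlam.le (norm_nonneg x)

theorem stmt_15 (d l : ℕ)
    (b : EuclideanSpace ℝ (Fin d) → EuclideanSpace ℝ (Fin d))
    (σ : EuclideanSpace ℝ (Fin d) → Matrix (Fin d) (Fin l) ℝ)
    (α β lam_a : ℝ) (hα : 0 < α) (hβ : 0 < β) (hlam : 0 < lam_a)
    (hgen2 : ∀ x, diffusionGen b σ (fun y => ‖y‖ ^ 2) x =
      2 * ⟪b x, x⟫ + ∑ i, ∑ j, (σ x i j) ^ 2)
    (hdiss : ∀ x : EuclideanSpace ℝ (Fin d),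
      2 * ⟪b x, x⟫ + ∑ i, ∑ j, (σ x i j) ^ 2 ≤ -α * ‖x‖ ^ 2 + β)
    (hgrow : ∀ x : EuclideanSpace ℝ (Fin d),
      ‖Matrix.toEuclideanCLM (𝕜 := ℝ) (σ x * (σ x)ᵀ)‖ ≤ lam_a / 4 * (1 + ‖x‖))
    (n : ℕ) (hn : 3 ≤ n) (x : EuclideanSpace ℝ (Fin d)) :
    diffusionGen b σ (fun y => ‖y‖ ^ n) x ≤
      -α * ‖x‖ ^ n +
        (β + n * lam_a / 8 + α / 2 * ((n * lam_a + 6 * β) / (2 * α)) ^ n) :=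
  stmt_15_general d l b σ α β lam_a hα hβ hlam hdiss hgrow n hn x
end

section
/- Fix $c > \frac{d+3}{2}$, $\gamma \geq 1$, and consider on $\mathbb{R}^d$ the functions $f(x) = c\log(1 + \frac{1}{2}\|x\|_2^2)$, $\sigma(x) = \sqrt{1+\frac{1}{2}\|x\|_2^2}\, I$, $a(x) = \sigma(x)\sigma(x)^\top$, $b_\gamma(x) = -\frac{1}{2}a(x)\nabla f(x) + \frac{1}{2\gamma}\langle \nabla, a(x)\rangle$, and $\sigma_\gamma = \frac{1}{\sqrt{\gamma}}\sigma$. Then for all $x, y \in \mathbb{R}^d$, $2\langle b_\gamma(x) - b_\gamma(y), x-y\rangle + \|\sigma_\gamma(x) - \sigma_\gamma(y)\|_F^2 \leq -\left(c - \frac{d+3}{2\gamma}\right)\|x-y\|_2^2$. -/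
open MeasureTheory Matrix RealInnerProductSpace

/-!
Since `a(x) = (1 + ‖x‖²/2) I` and `∇f(x) = c x / (1 + ‖x‖²/2)`, the drift is linear:
`b_γ(x) = (1/(2γ) - c/2) x`, so the inner-product term is exactly `(1/γ - c) ‖x - y‖²`.
The diffusion difference is the scalar matrix `(√(1 + ‖x‖²/2) - √(1 + ‖y‖²/2))/√γ • I`, whose
squared Frobenius norm is at most `d ‖x - y‖² / (2γ)` because `z ↦ √(1 + z²/2)` is
`1/√2`-Lipschitz.
-/

section InnerProductSpace

variable {E : Type*} [NormedAddCommGroup E] [InnerProductSpace ℝ E]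

theorem hasFDerivAt_one_add_norm_sq_div_two (x : E) :
    HasFDerivAt (fun y : E => 1 + ‖y‖ ^ 2 / 2) (innerSL ℝ x) x := by
  have h : HasFDerivAt (fun y : E => ‖y‖ ^ 2) (2 • innerSL ℝ x) x :=
    (hasStrictFDerivAt_norm_sq x).hasFDerivAt
  refine ((h.mul_const (1 / 2 : ℝ)).const_add 1).congr_fderiv ?_ |>.congr_of_eventuallyEq ?_
  · ext v
    simp [two_smul]
    ring
  · filter_upwards with y using by ring

theorem hasGradientAt_mul_log_one_add_norm_sq_div_two [CompleteSpace E] (c : ℝ) (x : E) :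
    HasGradientAt (fun y : E => c * Real.log (1 + ‖y‖ ^ 2 / 2))
      ((c / (1 + ‖x‖ ^ 2 / 2)) • x) x := by
  have hpos : 0 < 1 + ‖x‖ ^ 2 / 2 := by positivity
  have h := ((Real.hasDerivAt_log hpos.ne').comp_hasFDerivAt x
    (hasFDerivAt_one_add_norm_sq_div_two x)).const_mul c
  rw [hasGradientAt_iff_hasFDerivAt]
  refine h.congr_fderiv ?_
  ext v
  simp [div_eq_mul_inv]
  ring

end InnerProductSpace

theorem sq_sqrt_one_add_sq_div_two_sub_le (s t : ℝ) :
    (√(1 + s ^ 2 / 2) - √(1 + t ^ 2 / 2)) ^ 2 ≤ (s - t) ^ 2 / 2 := by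
  set A := √(1 + s ^ 2 / 2)
  set B := √(1 + t ^ 2 / 2)
  have hA : A ^ 2 = 1 + s ^ 2 / 2 := Real.sq_sqrt (by positivity)
  have hB : B ^ 2 = 1 + t ^ 2 / 2 := Real.sq_sqrt (by positivity)
  -- `(2AB)² - (2 + st)² = 2 (s - t)²`
  have hsq : (2 + s * t) ^ 2 ≤ (2 * (A * B)) ^ 2 := by nlinarith [sq_nonneg (s - t)]
  have hlin : 2 + s * t ≤ 2 * (A * B) := (abs_le_of_sq_le_sq' hsq (by positivity)).2
  nlinarith

theorem sq_sqrt_one_add_norm_sq_div_two_sub_le {E : Type*} [SeminormedAddCommGroup E] (x y : E) :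
    (√(1 + ‖x‖ ^ 2 / 2) - √(1 + ‖y‖ ^ 2 / 2)) ^ 2 ≤ ‖x - y‖ ^ 2 / 2 := by
  have h : (‖x‖ - ‖y‖) ^ 2 ≤ ‖x - y‖ ^ 2 := sq_le_sq.2 (by simpa using abs_norm_sub_norm_le x y)
  linarith [sq_sqrt_one_add_sq_div_two_sub_le ‖x‖ ‖y‖]

theorem sum_fderiv_mul_ite {ι F : Type*} [Fintype ι] [DecidableEq ι] [NormedAddCommGroup F]
    [NormedSpace ℝ F] (g : F → ℝ) (v : ι → F) (x : F) (j : ι) :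
    ∑ k, fderiv ℝ (fun y => g y * if j = k then (1 : ℝ) else 0) x (v k) = fderiv ℝ g x (v j) := by
  rw [Finset.sum_eq_single j]
  · simp
  · intro k _ hk
    simp [Ne.symm hk]
  · simp

theorem EuclideanSpace.divergence_one_add_norm_sq_div_two_smul_one {ι : Type*} [Fintype ι]
    [DecidableEq ι] (x : EuclideanSpace ℝ ι) :
    (WithLp.equiv 2 (ι → ℝ)).symm (fun j => ∑ k, fderiv ℝ (fun y : EuclideanSpace ℝ ι =>
      (1 + ‖y‖ ^ 2 / 2) * if j = k then (1 : ℝ) else 0) x (EuclideanSpace.single k 1)) = x := by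
  ext j
  simp only [WithLp.equiv_symm_apply]
  rw [sum_fderiv_mul_ite]
  simp [(hasFDerivAt_one_add_norm_sq_div_two x).fderiv, EuclideanSpace.inner_single_right]

theorem Matrix.sum_sq_smul_one_sub_smul_one {ι R : Type*} [Fintype ι] [DecidableEq ι]
    [CommRing R] (a b : R) :
    ∑ i, ∑ j, ((a • (1 : Matrix ι ι R) - b • 1) i j) ^ 2 = Fintype.card ι * (a - b) ^ 2 := by
  rw [← sub_smul]
  simp [Matrix.one_apply]

theorem stmt_16_general (d : ℕ) (c γ : ℝ) (hγ : 1 ≤ γ)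
    (f : EuclideanSpace ℝ (Fin d) → ℝ)
    (hf : ∀ x, f x = c * Real.log (1 + ‖x‖ ^ 2 / 2))
    (bγ : EuclideanSpace ℝ (Fin d) → EuclideanSpace ℝ (Fin d))
    -- b_γ(x) = -(1/2) a(x) ∇f(x) + (1/(2γ)) ⟨∇, a(x)⟩ with a(x) = (1 + ‖x‖²/2) I
    (hb : ∀ x, bγ x =
      -((1 : ℝ) / 2) • ((1 + ‖x‖ ^ 2 / 2) • gradient f x) +
        (1 / (2 * γ)) • ((WithLp.equiv 2 (Fin d → ℝ)).symm fun j => ∑ k,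
          fderiv ℝ (fun y : EuclideanSpace ℝ (Fin d) =>
            (1 + ‖y‖ ^ 2 / 2) * (if j = k then (1 : ℝ) else 0)) x
              (EuclideanSpace.single k 1)))
    (σγ : EuclideanSpace ℝ (Fin d) → Matrix (Fin d) (Fin d) ℝ)
    (hσ : ∀ x, σγ x = (Real.sqrt (1 + ‖x‖ ^ 2 / 2) / Real.sqrt γ) • (1 : Matrix (Fin d) (Fin d) ℝ)) :
    ∀ x y : EuclideanSpace ℝ (Fin d),
      2 * ⟪bγ x - bγ y, x - y⟫ + ∑ i, ∑ j, ((σγ x - σγ y) i j) ^ 2 ≤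
        -(c - ((d : ℝ) + 3) / (2 * γ)) * ‖x - y‖ ^ 2 := by
  intro x y
  have hγ0 : 0 < γ := by linarith
  have hdrift : ∀ z, bγ z = (1 / (2 * γ) - c / 2) • z := fun z => by
    have hz : 1 + ‖z‖ ^ 2 / 2 ≠ 0 := by positivity
    rw [hb, show f = _ from funext hf, (hasGradientAt_mul_log_one_add_norm_sq_div_two c z).gradient,
      EuclideanSpace.divergence_one_add_norm_sq_div_two_smul_one, smul_smul (1 + ‖z‖ ^ 2 / 2), mul_div_cancel₀ _ hz]
    module
  have hfrob : ∑ i, ∑ j, ((σγ x - σγ y) i j) ^ 2 ≤ d * (‖x - y‖ ^ 2 / 2) / γ := by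
    rw [hσ, hσ, Matrix.sum_sq_smul_one_sub_smul_one, ← sub_div, div_pow, Real.sq_sqrt hγ0.le,
      Fintype.card_fin, mul_div_assoc]
    gcongr
    exact sq_sqrt_one_add_norm_sq_div_two_sub_le x y
  rw [hdrift, hdrift, ← smul_sub, real_inner_smul_left, real_inner_self_eq_norm_sq]
  have hslack : 2 * ((1 / (2 * γ) - c / 2) * ‖x - y‖ ^ 2) + d * (‖x - y‖ ^ 2 / 2) / γ =
      -(c - ((d : ℝ) + 3) / (2 * γ)) * ‖x - y‖ ^ 2 - ‖x - y‖ ^ 2 / (2 * γ) := by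
    field_simp
    ring
  have : 0 ≤ ‖x - y‖ ^ 2 / (2 * γ) := by positivity
  linarith

theorem stmt_16 (d : ℕ) (c γ : ℝ) (hc : ((d : ℝ) + 3) / 2 < c) (hγ : 1 ≤ γ)
    (f : EuclideanSpace ℝ (Fin d) → ℝ)
    (hf : ∀ x, f x = c * Real.log (1 + ‖x‖ ^ 2 / 2))
    (bγ : EuclideanSpace ℝ (Fin d) → EuclideanSpace ℝ (Fin d))
    -- b_γ(x) = -(1/2) a(x) ∇f(x) + (1/(2γ)) ⟨∇, a(x)⟩ with a(x) = (1 + ‖x‖²/2) I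
    (hb : ∀ x, bγ x =
      -((1 : ℝ) / 2) • ((1 + ‖x‖ ^ 2 / 2) • gradient f x) +
        (1 / (2 * γ)) • ((WithLp.equiv 2 (Fin d → ℝ)).symm fun j => ∑ k,
          fderiv ℝ (fun y : EuclideanSpace ℝ (Fin d) =>
            (1 + ‖y‖ ^ 2 / 2) * (if j = k then (1 : ℝ) else 0)) x
              (EuclideanSpace.single k 1)))
    (σγ : EuclideanSpace ℝ (Fin d) → Matrix (Fin d) (Fin d) ℝ)
    (hσ : ∀ x, σγ x = (Real.sqrt (1 + ‖x‖ ^ 2 / 2) / Real.sqrt γ) • (1 : Matrix (Fin d) (Fin d) ℝ)) :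
    ∀ x y : EuclideanSpace ℝ (Fin d),
      2 * ⟪bγ x - bγ y, x - y⟫ + ∑ i, ∑ j, ((σγ x - σγ y) i j) ^ 2 ≤
        -(c - ((d : ℝ) + 3) / (2 * γ)) * ‖x - y‖ ^ 2 :=
  stmt_16_general d c γ hγ f hf bγ hb σγ hσ
end
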